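/- Let (L,μ) be a valued field with value group Γ_L and residue field ℓ, let ≤_ℓ be a linear order making ℓ an ordered field, and let p₁,…,p_t ∈ L× with γ_i = μ(p_i) such that the images of γ₁,…,γ_t in Γ_L/2Γ_L are linearly independent over ℤ/2ℤ. Then there exists a linear order ≤_L making L an ordered field which induces ≤_ℓ on ℓ and such that p_i ≥_L 0 for every 1 ≤ i ≤ t. -/

import Mathlib

universe u v w

open MvPolynomial

/-- A (linear) field ordering, given by its cone of non-negative elements.
This is equivalent to a linear order making the field an ordered field. -/
structure FieldOrdering (L : Type*) [Field L] where
  P : Set L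
  add_mem : ∀ x ∈ P, ∀ y ∈ P, x + y ∈ P
  mul_mem : ∀ x ∈ P, ∀ y ∈ P, x * y ∈ P
  square_mem : ∀ x : L, x * x ∈ P
  neg_one_not_mem : (-1 : L) ∉ P
  total : ∀ x : L, x ∈ P ∨ -x ∈ P

/-- `x >_L 0` for a field ordering. -/
def FieldOrdering.Pos {L : Type*} [Field L] (O : FieldOrdering L) (x : L) : Prop :=
  x ∈ O.P ∧ x ≠ 0

/-- An ordering on a valued field is compatible with the (multiplicative) valuation
if `0 < x < y` implies `w x ≤ w y` (i.e. the additive valuation of `x` is at least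
that of `y`); equivalently, the valuation ring is convex. -/
def FieldOrdering.IsCompatible {L : Type*} [Field L] {Γ : Type*}
    [LinearOrderedCommGroupWithZero Γ] (O : FieldOrdering L) (w : Valuation L Γ) : Prop :=
  ∀ x y : L, O.Pos x → O.Pos (y - x) → w x ≤ w y

/-- A field `K` is real closed: every nonnegative element is a square and every
polynomial of odd degree has a root. -/
def IsRealClosedField (K : Type*) [Field K] [LinearOrder K] [IsStrictOrderedRing K] : Prop :=
  (∀ x : K, 0 ≤ x → ∃ y : K, y * y = x) ∧
    ∀ p : Polynomial K, Odd p.natDegree → ∃ x : K, p.IsRoot x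

/-- `(K, ≤, ν)` is a real closed valued field: `K` is real closed and the
valuation ring of `ν` is convex (`0 < x < y → ν x ≤ ν y` multiplicatively). -/
def IsRCVF {K : Type*} [Field K] [LinearOrder K] [IsStrictOrderedRing K] {Γ₀ : Type*}
    [LinearOrderedCommGroupWithZero Γ₀] (ν : Valuation K Γ₀) : Prop :=
  IsRealClosedField K ∧ ∀ x y : K, 0 < x → x < y → ν x ≤ ν y

/-- The field of rational functions in `n` variables over `K`. -/
abbrev RatFuncField (K : Type u) [Field K] (n : ℕ) : Type u :=
  FractionRing (MvPolynomial (Fin n) K)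

/-- `f = q/r` with `r b ≠ 0` and `v = q b / r b`; i.e. `f` is defined at `b` with value `v`. -/
def HasEvalAt {K : Type u} [Field K] {n : ℕ} (f : RatFuncField K n) (b : Fin n → K) (v : K) :
    Prop :=
  ∃ q r : MvPolynomial (Fin n) K, eval b r ≠ 0 ∧
    f = algebraMap (MvPolynomial (Fin n) K) (RatFuncField K n) q /
      algebraMap (MvPolynomial (Fin n) K) (RatFuncField K n) r ∧
    v = eval b q / eval b r

/-- `f` is defined at `b`. -/
def IsDefinedAt {K : Type u} [Field K] {n : ℕ} (f : RatFuncField K n) (b : Fin n → K) : Prop :=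
  ∃ v : K, HasEvalAt f b v

/-- A valuation `w` on an extension field extends `ν` if the valuation ring of `w`
intersected with `K` is the valuation ring of `ν`. -/
def ValExtends {K L : Type*} [Field K] [Field L] [Algebra K L] {Γ₀ Γ : Type*}
    [LinearOrderedCommGroupWithZero Γ₀] [LinearOrderedCommGroupWithZero Γ]
    (ν : Valuation K Γ₀) (w : Valuation L Γ) : Prop :=
  ∀ a : K, w (algebraMap K L a) ≤ 1 ↔ ν a ≤ 1

/-- An OVF-valuation on `L` (over `(K,ν)`): a valuation extending `ν` admitting a
compatible field ordering. -/
def IsOVFValuation {K L : Type*} [Field K] [Field L] [Algebra K L] {Γ₀ Γ : Type*}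
    [LinearOrderedCommGroupWithZero Γ₀] [LinearOrderedCommGroupWithZero Γ]
    (ν : Valuation K Γ₀) (w : Valuation L Γ) : Prop :=
  ValExtends ν w ∧ ∃ O : FieldOrdering L, O.IsCompatible w

/-- A valuation on `K(x₁,…,xₙ)` is near `b ∈ Kⁿ` if every rational function defined
at `b` and vanishing at `b` has valuation above every element of the value group of `K`
(multiplicatively: `w f < w a` for every nonzero `a ∈ K`). -/
def IsNear {K : Type u} [Field K] {n : ℕ} {Γ : Type*} [LinearOrderedCommGroupWithZero Γ]
    (w : Valuation (RatFuncField K n) Γ) (b : Fin n → K) : Prop :=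
  ∀ f : RatFuncField K n, HasEvalAt f b 0 →
    ∀ a : K, a ≠ 0 → w f < w (algebraMap K (RatFuncField K n) a)

/-- `f` is OVF-integral at `b`: every OVF-valuation near `b` takes `f` into its
valuation ring. -/
def IsOVFIntegralAt {K : Type u} [Field K] {Γ₀ : Type v} [LinearOrderedCommGroupWithZero Γ₀]
    {n : ℕ} (ν : Valuation K Γ₀) (f : RatFuncField K n) (b : Fin n → K) : Prop :=
  ∀ (Γ : Type w) (_ : LinearOrderedCommGroupWithZero Γ)
    (wb : Valuation (RatFuncField K n) Γ),
    IsOVFValuation ν wb → IsNear wb b → wb f ≤ 1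

/-- `Cone P`: the smallest subset of `L` containing `P` and all squares of nonzero
elements which is closed under addition and multiplication. -/
inductive InCone {L : Type*} [Field L] (P : Set L) : L → Prop
  | mem : ∀ x ∈ P, InCone P x
  | sq : ∀ x : L, x ≠ 0 → InCone P (x * x)
  | add : ∀ x y : L, InCone P x → InCone P y → InCone P (x + y)
  | mul : ∀ x y : L, InCone P x → InCone P y → InCone P (x * y)

/-- The open semi-algebraic set `S_p̄ = {b | p_i(b) > 0 for all i}`. -/
def SetSP {K : Type u} [Field K] [LinearOrder K] [IsStrictOrderedRing K] {n m : ℕ}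
    (p : Fin m → MvPolynomial (Fin n) K) : Set (Fin n → K) :=
  {b | ∀ i, 0 < eval b (p i)}

/-- The set `I_p̄ = { 1/(1+f) : f ∈ Cone({p₁,…,p_m}) }` inside `K(x₁,…,xₙ)`. -/
def SetIP {K : Type u} [Field K] {n m : ℕ} (p : Fin m → MvPolynomial (Fin n) K) :
    Set (RatFuncField K n) :=
  {g | ∃ f : RatFuncField K n,
    InCone (Set.range fun i => algebraMap (MvPolynomial (Fin n) K) (RatFuncField K n) (p i)) f ∧
    g = (1 + f)⁻¹}

/-- The `O_ν`-subalgebra of `K(x₁,…,xₙ)` generated by a set `I` (as a subring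
generated by `I` together with the image of `O_ν`). -/
noncomputable def OAlgebraGen {K : Type u} [Field K] {Γ₀ : Type v} [LinearOrderedCommGroupWithZero Γ₀]
    (ν : Valuation K Γ₀) {n : ℕ} (I : Set (RatFuncField K n)) : Subring (RatFuncField K n) :=
  Subring.closure ((algebraMap K (RatFuncField K n) '' {a : K | ν a ≤ 1}) ∪ I)



/-- The multiplicative set `T = {1 + m·a : m ∈ M_ν, a ∈ A}` used for the integral radical. -/
def SetT {K : Type u} [Field K] {Γ₀ : Type v} [LinearOrderedCommGroupWithZero Γ₀]
    (ν : Valuation K Γ₀) {n : ℕ} (A : Subring (RatFuncField K n)) :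
    Set (RatFuncField K n) :=
  {t | ∃ m : K, ν m < 1 ∧ ∃ a ∈ A, t = 1 + algebraMap K (RatFuncField K n) m * a}

/-- The localization `A_T` of `A` at `T`, realized inside `L` as the subring generated
by `A` together with the inverses of the elements of `T`. -/
noncomputable def LocAT {K : Type u} [Field K] {n : ℕ}
    (A : Subring (RatFuncField K n)) (T : Set (RatFuncField K n)) :
    Subring (RatFuncField K n) :=
  Subring.closure ((A : Set (RatFuncField K n)) ∪ ((fun t => t⁻¹) '' T))

/-- The integral radical of `A`: the integral closure in `L` of the localization `A_T`. -/
noncomputable def IntegralRadical {K : Type u} [Field K] {Γ₀ : Type v}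
    [LinearOrderedCommGroupWithZero Γ₀] (ν : Valuation K Γ₀) {n : ℕ}
    (A : Subring (RatFuncField K n)) : Set (RatFuncField K n) :=
  (integralClosure (LocAT A (SetT ν A)) (RatFuncField K n) :
    Subalgebra (LocAT A (SetT ν A)) (RatFuncField K n))

/-- A semi-section of a valued field `(L, μ)` (with `μ` surjective, so that the nonzero
elements of `Γ` form the value group): a map `s : Γ → L` with `μ (s γ) = γ` such that
`s (γ₁γ₂) / (s γ₁ · s γ₂)` is always a square. -/
def IsSemiSection {L : Type*} [Field L] {Γ : Type*} [LinearOrderedCommGroupWithZero Γ]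
    (μ : Valuation L Γ) (s : Γ → L) : Prop :=
  (∀ γ : Γ, γ ≠ 0 → μ (s γ) = γ) ∧
    ∀ γ₁ γ₂ : Γ, γ₁ ≠ 0 → γ₂ ≠ 0 →
      ∃ c : L, c ≠ 0 ∧ s (γ₁ * γ₂) = s γ₁ * s γ₂ * (c * c)

/-- `y ∈ O_μ` and its residue is `>_ℓ 0` for the given ordering of the residue field. -/
def ResPos {L : Type*} [Field L] {Γ : Type*} [LinearOrderedCommGroupWithZero Γ]
    (μ : Valuation L Γ)
    (Oℓ : FieldOrdering (IsLocalRing.ResidueField μ.valuationSubring)) (y : L) : Prop :=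
  ∃ u : μ.valuationSubring, (u : L) = y ∧
    Oℓ.Pos (IsLocalRing.residue (μ.valuationSubring) u)

/-- An ordering `OL` of `L` induces the ordering `Oℓ` of the residue field:
positive units of the valuation ring have positive residue. -/
def OrderingInduces {L : Type*} [Field L] {Γ : Type*} [LinearOrderedCommGroupWithZero Γ]
    (μ : Valuation L Γ) (OL : FieldOrdering L)
    (Oℓ : FieldOrdering (IsLocalRing.ResidueField μ.valuationSubring)) : Prop :=
  ∀ u : μ.valuationSubring, μ (u : L) = 1 → OL.Pos (u : L) →
    Oℓ.Pos (IsLocalRing.residue (μ.valuationSubring) u)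

/-- The set `S_{p̄,ḡ}`: points where all `p_i` are positive and all `g_j` are defined
with value in the valuation ring. -/
def SetSPG {K : Type u} [Field K] [LinearOrder K] [IsStrictOrderedRing K] {Γ₀ : Type v}
    [LinearOrderedCommGroupWithZero Γ₀] (ν : Valuation K Γ₀) {n m l : ℕ}
    (p : Fin m → MvPolynomial (Fin n) K) (g : Fin l → RatFuncField K n) :
    Set (Fin n → K) :=
  {b | (∀ i, 0 < eval b (p i)) ∧ ∀ j, ∃ v : K, HasEvalAt (g j) b v ∧ ν v ≤ 1}

/-!
The elements `(∏ i ∈ S, p i) * d ^ 2 * u`, with `u` a unit of positive residue, form a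
preordering of `L`. It is closed under products because `p i ^ 2` is a square. It is closed
under sums because, by the independence of the `μ (p i)` modulo squares, the value
`μ ((∏ i ∈ S, p i) * d ^ 2)` determines `S` and `μ d`: either one summand has strictly
smaller value than the other and only perturbs its unit by an element of value `< 1`, or
both share `S` and the sum is `(∏ i ∈ S, p i) * d ^ 2 * (u + (e / d) ^ 2 * v)`, whose unit
still has positive residue. Finally `-1` is not of this form, since then `S = ∅`, `μ d = 1`
and `u = -(d⁻¹) ^ 2` has negative residue. By Zorn's lemma the preordering extends to an
ordering, which contains every `p i` and induces `Oℓ`: a unit `u` with negative residue has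
`-u` in the preordering, so `u` cannot be positive.
-/

open scoped symmDiff

theorem Finset.prod_mul_prod_eq_prod_symmDiff_mul_sq {ι M : Type*} [CommMonoid M] [DecidableEq ι]
    (f : ι → M) (s t : Finset ι) :
    (∏ i ∈ s, f i) * ∏ i ∈ t, f i = (∏ i ∈ s ∆ t, f i) * (∏ i ∈ s ∩ t, f i) ^ 2 := by
  rw [← prod_union_inter, ← prod_sdiff (inter_subset_union (s := s) (t := t)),
    symmDiff_eq_sup_sdiff_inf, sup_eq_union, inf_eq_inter, pow_two, mul_assoc]

section IndepModSquares

variable {ι Γ : Type*} [LinearOrderedCommGroupWithZero Γ] {a : ι → Γ}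

/-- The classes of the `a i` in `Γ / Γ²` (the paper's `Γ_L / 2Γ_L`, written multiplicatively)
are linearly independent over `𝔽₂`. -/
def IsIndepModSquares (a : ι → Γ) : Prop :=
  ∀ S : Finset ι, (∃ δ : Γ, ∏ i ∈ S, a i = δ * δ) → S = ∅

theorem IsIndepModSquares.eq_and_eq_of_prod_mul_sq_eq [DecidableEq ι] (ha : IsIndepModSquares a)
    {S T : Finset ι} {δ ε : Γ} (h0 : (∏ i ∈ S, a i) * δ ^ 2 ≠ 0)
    (h : (∏ i ∈ S, a i) * δ ^ 2 = (∏ i ∈ T, a i) * ε ^ 2) : S = T ∧ δ = ε := by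
  have hS : ∏ i ∈ S, a i ≠ 0 := left_ne_zero_of_mul h0
  have hδ : δ ≠ 0 := pow_ne_zero_iff two_ne_zero |>.mp (right_ne_zero_of_mul h0)
  have hc : ∏ i ∈ S ∩ T, a i ≠ 0 := Finset.prod_ne_zero_iff.mpr fun i hi =>
    Finset.prod_ne_zero_iff.mp hS i (Finset.mem_of_mem_inter_left hi)
  have hsq : ∏ i ∈ S ∆ T, a i = ((∏ i ∈ T, a i) * ε / ((∏ i ∈ S ∩ T, a i) * δ)) ^ 2 := by
    rw [div_pow, eq_div_iff (by simp [hc, hδ]), mul_pow, mul_pow, ← mul_assoc,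
      ← Finset.prod_mul_prod_eq_prod_symmDiff_mul_sq, mul_right_comm, h, mul_right_comm, ← pow_two]
  have hST : S = T := symmDiff_eq_bot.mp (ha _ ⟨_, hsq.trans (pow_two _)⟩)
  subst hST
  exact ⟨rfl, (pow_left_inj₀ zero_le zero_le two_ne_zero).mp (mul_left_cancel₀ hS h)⟩

end IndepModSquares

namespace RingPreordering

variable {R : Type*} [CommRing R]

theorem exists_le_isMax (P : RingPreordering R) : ∃ Q, P ≤ Q ∧ IsMax Q := by
  refine zorn_le_nonempty_Ici₀ P (fun c _ hc Q₀ hQ₀ => ?_) P le_rfl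
  have exists_mem_both {x y : R} (hx : x ∈ ⋃ Q ∈ c, (Q : Set R)) (hy : y ∈ ⋃ Q ∈ c, (Q : Set R)) :
      ∃ Q ∈ c, x ∈ Q ∧ y ∈ Q := by
    simp only [Set.mem_iUnion, SetLike.mem_coe, exists_prop] at hx hy
    obtain ⟨Q₁, h₁, hx⟩ := hx
    obtain ⟨Q₂, h₂, hy⟩ := hy
    rcases hc.total h₁ h₂ with h | h
    · exact ⟨Q₂, h₂, h hx, hy⟩
    · exact ⟨Q₁, h₁, hx, h hy⟩
  refine ⟨mk' (⋃ Q ∈ c, (Q : Set R)) (fun hx hy => ?_) (fun hx hy => ?_)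
    (fun x => Set.mem_biUnion hQ₀ (Q₀.mul_self_mem x)) ?_,
    fun Q hQ x hx => Set.mem_biUnion hQ hx⟩
  · obtain ⟨Q, hQ, hx, hy⟩ := exists_mem_both hx hy
    exact Set.mem_biUnion hQ (add_mem hx hy)
  · obtain ⟨Q, hQ, hx, hy⟩ := exists_mem_both hx hy
    exact Set.mem_biUnion hQ (mul_mem hx hy)
  · simp only [Set.mem_iUnion, SetLike.mem_coe, exists_prop, not_exists, not_and]
    exact fun Q _ => Q.neg_one_notMem

theorem exists_neg_one_eq_of_isMax {P : RingPreordering R} (hP : IsMax P) {z : R} (hz : z ∉ P) :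
    ∃ a ∈ P, ∃ b ∈ P, -1 = a + z * b := by
  by_contra! h
  let Q : RingPreordering R := mk' {x | ∃ a ∈ P, ∃ b ∈ P, x = a + z * b}
    (by
      rintro _ _ ⟨a, ha, b, hb, rfl⟩ ⟨c, hc, d, hd, rfl⟩
      exact ⟨a + c, add_mem ha hc, b + d, add_mem hb hd, by ring⟩)
    (by
      rintro _ _ ⟨a, ha, b, hb, rfl⟩ ⟨c, hc, d, hd, rfl⟩
      exact ⟨a * c + z * z * (b * d), add_mem (mul_mem ha hc) (mul_mem (P.mul_self_mem z)
        (mul_mem hb hd)), a * d + b * c, add_mem (mul_mem ha hd) (mul_mem hb hc), by ring⟩)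
    (fun x => ⟨x * x, P.mul_self_mem x, 0, zero_mem P, by ring⟩)
    (fun ⟨a, ha, b, hb, hab⟩ => h a ha b hb hab)
  have hPQ : P ≤ Q := fun x hx => ⟨x, hx, 0, zero_mem P, by ring⟩
  exact hz (hP hPQ ⟨0, zero_mem P, 1, one_mem P, by ring⟩)

theorem hasMemOrNegMem_of_isMax {P : RingPreordering R} (hP : IsMax P) : HasMemOrNegMem P := by
  refine ⟨fun x => ?_⟩
  by_contra! hx
  obtain ⟨a, ha, b, hb, hab⟩ := exists_neg_one_eq_of_isMax hP hx.1
  obtain ⟨c, hc, d, hd, hcd⟩ := exists_neg_one_eq_of_isMax hP hx.2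
  -- `(1 + a) * (1 + c) = -x² * b * d`
  have : -1 = a + c + a * c + x * x * (b * d) := by
    linear_combination (1 + c) * hab + (-x * b) * hcd
  exact P.neg_one_notMem (this ▸ add_mem (add_mem (add_mem ha hc) (mul_mem ha hc))
    (mul_mem (P.mul_self_mem x) (mul_mem hb hd)))

theorem exists_le_hasMemOrNegMem (P : RingPreordering R) : ∃ Q, P ≤ Q ∧ HasMemOrNegMem Q :=
  let ⟨Q, hPQ, hQ⟩ := P.exists_le_isMax
  ⟨Q, hPQ, hasMemOrNegMem_of_isMax hQ⟩

end RingPreordering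

namespace FieldOrdering

variable {F : Type*} [Field F] (O : FieldOrdering F)

theorem eq_zero_of_mem_of_neg_mem {x : F} (hx : x ∈ O.P) (hx' : -x ∈ O.P) : x = 0 := by
  by_contra h
  have : x * -x * (x⁻¹ * x⁻¹) = -1 := by field_simp
  exact O.neg_one_not_mem (this ▸ O.mul_mem _ (O.mul_mem _ hx _ hx') _ (O.square_mem _))

variable {O}

theorem pos_one : O.Pos 1 := ⟨by simpa using O.square_mem 1, one_ne_zero⟩

theorem Pos.mul {x y : F} (hx : O.Pos x) (hy : O.Pos y) : O.Pos (x * y) :=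
  ⟨O.mul_mem _ hx.1 _ hy.1, mul_ne_zero hx.2 hy.2⟩

theorem Pos.add {x y : F} (hx : O.Pos x) (hy : O.Pos y) : O.Pos (x + y) :=
  ⟨O.add_mem _ hx.1 _ hy.1, fun h =>
    hx.2 (O.eq_zero_of_mem_of_neg_mem hx.1 (neg_eq_of_add_eq_zero_right h ▸ hy.1))⟩

theorem pos_mul_self {x : F} (hx : x ≠ 0) : O.Pos (x * x) :=
  ⟨O.square_mem x, mul_ne_zero hx hx⟩

theorem not_pos_neg_mul_self (x : F) : ¬ O.Pos (-(x * x)) := fun h =>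
  h.2 (by rw [O.eq_zero_of_mem_of_neg_mem (O.square_mem x) h.1, neg_zero])

theorem pos_or_pos_neg {x : F} (hx : x ≠ 0) : O.Pos x ∨ O.Pos (-x) :=
  (O.total x).imp (⟨·, hx⟩) (⟨·, neg_ne_zero.mpr hx⟩)

end FieldOrdering

def RingPreordering.toFieldOrdering {F : Type*} [Field F] (P : RingPreordering F)
    [HasMemOrNegMem P] : FieldOrdering F where
  P := P
  add_mem _ hx _ hy := add_mem hx hy
  mul_mem _ hx _ hy := mul_mem hx hy
  square_mem := P.mul_self_mem
  neg_one_not_mem := P.neg_one_notMem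
  total := HasMemOrNegMem.mem_or_neg_mem P

section ResPos

variable {L : Type*} [Field L] {Γ : Type*} [LinearOrderedCommGroupWithZero Γ]
  {μ : Valuation L Γ} {Oℓ : FieldOrdering (IsLocalRing.ResidueField μ.valuationSubring)}

theorem Valuation.residue_eq_zero_iff (u : μ.valuationSubring) :
    IsLocalRing.residue μ.valuationSubring u = 0 ↔ μ u < 1 := by
  rw [IsLocalRing.residue_eq_zero_iff, IsLocalRing.mem_maximalIdeal, mem_nonunits_iff,
    (Valuation.valuationSubring.integers μ).isUnit_iff_valuation_eq_one]
  exact (u.2 : μ u ≤ 1).lt_iff_ne.symm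

theorem resPos_coe_iff (u : μ.valuationSubring) :
    ResPos μ Oℓ u ↔ Oℓ.Pos (IsLocalRing.residue μ.valuationSubring u) :=
  ⟨fun ⟨_, hu, h⟩ => Subtype.ext hu ▸ h, fun h => ⟨u, rfl, h⟩⟩

theorem resPos_one : ResPos μ Oℓ 1 := ⟨1, rfl, by rw [map_one]; exact FieldOrdering.pos_one⟩

theorem ResPos.valuation_eq_one {u : L} (h : ResPos μ Oℓ u) : μ u = 1 := by
  obtain ⟨u, rfl, hu⟩ := h
  by_contra hne
  exact hu.2 ((Valuation.residue_eq_zero_iff u).mpr (lt_of_le_of_ne u.2 hne))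

theorem ResPos.mul {u v : L} (hu : ResPos μ Oℓ u) (hv : ResPos μ Oℓ v) :
    ResPos μ Oℓ (u * v) := by
  obtain ⟨u, rfl, hu⟩ := hu
  obtain ⟨v, rfl, hv⟩ := hv
  exact ⟨u * v, rfl, by rw [map_mul]; exact hu.mul hv⟩

theorem ResPos.add {u v : L} (hu : ResPos μ Oℓ u) (hv : ResPos μ Oℓ v) :
    ResPos μ Oℓ (u + v) := by
  obtain ⟨u, rfl, hu⟩ := hu
  obtain ⟨v, rfl, hv⟩ := hv
  exact ⟨u + v, rfl, by rw [map_add]; exact hu.add hv⟩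

theorem ResPos.add_of_valuation_lt_one {u r : L} (hu : ResPos μ Oℓ u) (hr : μ r < 1) :
    ResPos μ Oℓ (u + r) := by
  obtain ⟨u, rfl, hu⟩ := hu
  let r' : μ.valuationSubring := ⟨r, hr.le⟩
  refine ⟨u + r', rfl, ?_⟩
  rwa [map_add, (Valuation.residue_eq_zero_iff r').mpr hr, add_zero]

theorem resPos_mul_self {c : L} (hc : μ c = 1) : ResPos μ Oℓ (c * c) := by
  let c' : μ.valuationSubring := ⟨c, hc.le⟩
  refine ⟨c' * c', rfl, ?_⟩
  rw [map_mul]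
  exact FieldOrdering.pos_mul_self fun h => ((Valuation.residue_eq_zero_iff c').mp h).ne hc

theorem not_resPos_neg_mul_self (c : L) : ¬ ResPos μ Oℓ (-(c * c)) := by
  intro h
  have hc : μ c = 1 := by
    have := h.valuation_eq_one
    rwa [Valuation.map_neg, map_mul, ← pow_two, ← one_pow 2,
      pow_left_inj₀ zero_le zero_le two_ne_zero] at this
  let c' : μ.valuationSubring := ⟨c, hc.le⟩
  obtain ⟨u, hu, hpos⟩ := h
  obtain rfl : u = -(c' * c') := Subtype.ext hu
  rw [map_neg, map_mul] at hpos
  exact FieldOrdering.not_pos_neg_mul_self _ hpos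

theorem resPos_or_resPos_neg (u : μ.valuationSubring) (hu : μ u = 1) :
    ResPos μ Oℓ u ∨ ResPos μ Oℓ (-u) := by
  have h0 : IsLocalRing.residue μ.valuationSubring u ≠ 0 := by
    rw [Ne, Valuation.residue_eq_zero_iff, hu]; exact lt_irrefl 1
  refine (FieldOrdering.pos_or_pos_neg h0).imp (⟨u, rfl, ·⟩) fun h => ⟨-u, rfl, ?_⟩
  rwa [map_neg]

end ResPos

section PosCone

variable {L : Type*} [Field L] {Γ : Type*} [LinearOrderedCommGroupWithZero Γ]
  (μ : Valuation L Γ) (Oℓ : FieldOrdering (IsLocalRing.ResidueField μ.valuationSubring))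
  {ι : Type*} (p : ι → L)

-- `d = 0` is allowed, so that `0` is of this form.
def IsPosMonomial (x : L) : Prop :=
  ∃ (S : Finset ι) (d u : L), ResPos μ Oℓ u ∧ x = (∏ i ∈ S, p i) * d ^ 2 * u

variable {μ Oℓ p}

theorem isPosMonomial_apply (i : ι) : IsPosMonomial μ Oℓ p (p i) :=
  ⟨{i}, 1, 1, resPos_one, by simp⟩

theorem isPosMonomial_mul_self (c : L) : IsPosMonomial μ Oℓ p (c * c) :=
  ⟨∅, c, 1, resPos_one, by ring⟩

theorem valuation_prod_mul_sq_mul {S : Finset ι} {d u : L} (hu : ResPos μ Oℓ u) :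
    μ ((∏ i ∈ S, p i) * d ^ 2 * u) = (∏ i ∈ S, μ (p i)) * μ d ^ 2 := by
  rw [map_mul, hu.valuation_eq_one, mul_one, map_mul, map_prod, map_pow]

theorem IsPosMonomial.mul [DecidableEq ι] {x y : L} (hx : IsPosMonomial μ Oℓ p x)
    (hy : IsPosMonomial μ Oℓ p y) : IsPosMonomial μ Oℓ p (x * y) := by
  obtain ⟨S, d, u, hu, rfl⟩ := hx
  obtain ⟨T, e, v, hv, rfl⟩ := hy
  refine ⟨S ∆ T, d * e * ∏ i ∈ S ∩ T, p i, u * v, hu.mul hv, ?_⟩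
  linear_combination (d ^ 2 * e ^ 2 * u * v) * Finset.prod_mul_prod_eq_prod_symmDiff_mul_sq p S T

theorem IsPosMonomial.add_of_valuation_lt {x y : L} (hy : IsPosMonomial μ Oℓ p y)
    (h : μ x < μ y) : IsPosMonomial μ Oℓ p (x + y) := by
  obtain ⟨T, e, v, hv, rfl⟩ := hy
  set B := (∏ i ∈ T, p i) * e ^ 2
  have hB : μ (B * v) = μ B := by rw [map_mul, hv.valuation_eq_one, mul_one]
  rw [hB] at h
  have hB0 : B ≠ 0 := by
    rintro h0
    rw [h0, map_zero] at h
    exact not_lt_zero h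
  refine ⟨T, e, v + x / B, hv.add_of_valuation_lt_one ?_, by field_simp; ring⟩
  rwa [map_div₀, div_lt_one₀ (zero_lt_iff.mpr ((μ.ne_zero_iff).mpr hB0))]

theorem IsPosMonomial.add_of_valuation_eq [DecidableEq ι]
    (hindep : IsIndepModSquares fun i => μ (p i)) {x y : L}
    (hx : IsPosMonomial μ Oℓ p x) (hy : IsPosMonomial μ Oℓ p y) (h : μ x = μ y) :
    IsPosMonomial μ Oℓ p (x + y) := by
  obtain ⟨S, d, u, hu, rfl⟩ := hx
  obtain ⟨T, e, v, hv, rfl⟩ := hy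
  by_cases h0 : μ ((∏ i ∈ S, p i) * d ^ 2 * u) = 0
  · rw [(μ.zero_iff).mp h0, zero_add]
    exact ⟨T, e, v, hv, rfl⟩
  rw [valuation_prod_mul_sq_mul hu] at h0 h
  rw [valuation_prod_mul_sq_mul hv] at h
  obtain ⟨rfl, hde⟩ := hindep.eq_and_eq_of_prod_mul_sq_eq h0 h
  have hd : μ d ≠ 0 := pow_ne_zero_iff two_ne_zero |>.mp (right_ne_zero_of_mul h0)
  have hed : μ (e / d) = 1 := by rw [map_div₀, hde, div_self (hde ▸ hd)]
  refine ⟨S, d, u + e / d * (e / d) * v, hu.add ((resPos_mul_self hed).mul hv), ?_⟩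
  field_simp [(μ.ne_zero_iff).mp hd]

theorem IsPosMonomial.add [DecidableEq ι] (hindep : IsIndepModSquares fun i => μ (p i))
    {x y : L} (hx : IsPosMonomial μ Oℓ p x) (hy : IsPosMonomial μ Oℓ p y) :
    IsPosMonomial μ Oℓ p (x + y) := by
  rcases lt_trichotomy (μ x) (μ y) with h | h | h
  · exact hy.add_of_valuation_lt h
  · exact hx.add_of_valuation_eq hindep hy h
  · exact add_comm y x ▸ hx.add_of_valuation_lt h

theorem not_isPosMonomial_neg_one [DecidableEq ι] (hindep : IsIndepModSquares fun i => μ (p i)) :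
    ¬ IsPosMonomial μ Oℓ p (-1) := by
  rintro ⟨S, d, u, hu, h⟩
  have hval : (∏ i ∈ S, μ (p i)) * μ d ^ 2 = (∏ i ∈ ∅, μ (p i)) * 1 ^ 2 := by
    rw [← valuation_prod_mul_sq_mul hu, ← h, Valuation.map_neg, map_one, Finset.prod_empty,
      one_pow, one_mul]
  obtain ⟨rfl, hd⟩ := hindep.eq_and_eq_of_prod_mul_sq_eq (by simp [hval]) hval
  have hd0 : d ≠ 0 := (μ.ne_zero_iff).mp (by simp [hd])
  have hu' : u = -(d⁻¹ * d⁻¹) := by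
    field_simp
    linear_combination -h
  exact not_resPos_neg_mul_self d⁻¹ (hu' ▸ hu)

variable (μ Oℓ p) in
def posCone [DecidableEq ι] (hindep : IsIndepModSquares fun i => μ (p i)) : RingPreordering L :=
  .mk' {x | IsPosMonomial μ Oℓ p x} (fun hx hy => hx.add hindep hy) IsPosMonomial.mul
    isPosMonomial_mul_self (not_isPosMonomial_neg_one hindep)

end PosCone

theorem exists_ordering_inducing_with_pos_general {L : Type u} [Field L] {Γ : Type v}
    [LinearOrderedCommGroupWithZero Γ] (μ : Valuation L Γ)
    (Oℓ : FieldOrdering (IsLocalRing.ResidueField μ.valuationSubring))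
    {t : ℕ} (p : Fin t → L)
    (hindep : ∀ S : Finset (Fin t), (∃ δ : Γ, (∏ i ∈ S, μ (p i)) = δ * δ) → S = ∅) :
    ∃ OL : FieldOrdering L, OrderingInduces μ OL Oℓ ∧ ∀ i, p i ∈ OL.P := by
  obtain ⟨Q, hPQ, hQ⟩ := (posCone μ Oℓ p hindep).exists_le_hasMemOrNegMem
  refine ⟨Q.toFieldOrdering, fun u hu hpos => ?_, fun i => hPQ (isPosMonomial_apply i)⟩
  rcases resPos_or_resPos_neg u hu with h | h
  · exact (resPos_coe_iff u).mp h
  · exact absurd (Q.eq_zero_of_mem_of_neg_mem hpos.1 (hPQ ⟨∅, 1, _, h, by simp⟩)) hpos.2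

/-- If `p₁,…,p_t ∈ L×` have values independent modulo `2Γ_L`, then any
ordering of the residue field is induced by an ordering of `L` making all `p_i` nonnegative. -/
theorem exists_ordering_inducing_with_pos {L : Type u} [Field L] {Γ : Type v}
    [LinearOrderedCommGroupWithZero Γ] (μ : Valuation L Γ)
    (hsurj : ∀ γ : Γ, γ ≠ 0 → ∃ x : L, μ x = γ)
    (Oℓ : FieldOrdering (IsLocalRing.ResidueField μ.valuationSubring))
    {t : ℕ} (p : Fin t → L) (hp : ∀ i, p i ≠ 0)
    (hindep : ∀ S : Finset (Fin t), (∃ δ : Γ, (∏ i ∈ S, μ (p i)) = δ * δ) → S = ∅) :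
    ∃ OL : FieldOrdering L, OrderingInduces μ OL Oℓ ∧ ∀ i, p i ∈ OL.P :=
  exists_ordering_inducing_with_pos_general μ Oℓ p hindep
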